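/- arXiv:2311.12470 — 3 statements merged into one kernel-verified Lean document; each statement's English description precedes it below -/
import Mathlib

section
/- For a real Dirichlet character χ, λ = χ ∗ 1, and any natural numbers d, l ≥ 1, we have λ(l) · λ(d) ≤ λ(d·l)². -/
/-!
`λ = ζ * χ` is multiplicative, so it suffices to compare prime powers, where
`λ(p^k) = 1 + c + ⋯ + c^k` with `c = χ(p) ∈ {0, 1, -1}`. For `c ≥ 0` these partial sums are
nonnegative and increase with `k`; for `c = -1` they are `1` for even `k` and `0` for odd `k`,
and `a + b` is even when `a` and `b` are.
-/

open Finset ArithmeticFunction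
open scoped ArithmeticFunction.zeta

section GeomSum

variable {R : Type*} [CommRing R] [LinearOrder R] [IsStrictOrderedRing R]

lemma geom_sum_nonneg_of_neg_one_le {x : R} (hx : -1 ≤ x) (n : ℕ) :
    0 ≤ ∑ i ∈ range n, x ^ i := by
  rcases eq_or_ne n 0 with rfl | hn
  · simp
  · exact not_lt.1 fun h ↦ ((geom_sum_neg_iff hn).1 h).2.not_ge (by linarith)

-- False for `x ∈ (-1, 0)`, e.g. at `a = 0`, `b = 1`.
lemma geom_sum_succ_mul_le_sq {x : R} (hx : 0 ≤ x ∨ x = -1) (a b : ℕ) :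
    (∑ i ∈ range (a + 1), x ^ i) * ∑ i ∈ range (b + 1), x ^ i ≤
      (∑ i ∈ range (a + b + 1), x ^ i) ^ 2 := by
  rcases hx with hx | rfl
  · have hmono : ∀ k ≤ a + b, ∑ i ∈ range (k + 1), x ^ i ≤ ∑ i ∈ range (a + b + 1), x ^ i :=
      fun k hk ↦ sum_le_sum_of_subset_of_nonneg (range_subset_range.2 (by omega))
        fun i _ _ ↦ pow_nonneg hx i
    rw [sq]
    exact mul_le_mul (hmono a (by omega)) (hmono b (by omega))
      (geom_sum_nonneg_of_neg_one_le (by linarith) _)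
      (geom_sum_nonneg_of_neg_one_le (by linarith) _)
  · simp only [neg_one_geom_sum, Nat.even_add_one]
    split_ifs <;> simp_all [Nat.even_add]

end GeomSum

namespace ArithmeticFunction.IsMultiplicative

variable {R : Type*}

lemma eq_prod_of_primeFactors_subset [CommMonoidWithZero R] {f : ArithmeticFunction R}
    (hf : f.IsMultiplicative) {n : ℕ} (hn : n ≠ 0) {s : Finset ℕ} (hs : n.primeFactors ⊆ s) :
    f n = ∏ p ∈ s, f (p ^ n.factorization p) := by
  rw [hf.multiplicative_factorization f hn]
  exact Finsupp.prod_of_support_subset _ (by simpa) _ fun p _ ↦ by simp [hf.map_one]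

lemma mul_le_sq_of_prime_pow [CommSemiring R] [PartialOrder R] [IsOrderedRing R]
    {f : ArithmeticFunction R} (hf : f.IsMultiplicative)
    (hf_nonneg : ∀ p k, p.Prime → 0 ≤ f (p ^ k))
    (hf_pow : ∀ p a b, p.Prime → f (p ^ a) * f (p ^ b) ≤ f (p ^ (a + b)) ^ 2) (m n : ℕ) :
    f m * f n ≤ f (m * n) ^ 2 := by
  rcases eq_or_ne m 0 with rfl | hm
  · simp
  rcases eq_or_ne n 0 with rfl | hn
  · simp
  have hmn : m * n ≠ 0 := mul_ne_zero hm hn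
  have hm_prod :=
    hf.eq_prod_of_primeFactors_subset hm (Nat.primeFactors_mono (dvd_mul_right m n) hmn)
  have hn_prod :=
    hf.eq_prod_of_primeFactors_subset hn (Nat.primeFactors_mono (dvd_mul_left n m) hmn)
  have hmn_prod := hf.eq_prod_of_primeFactors_subset hmn subset_rfl
  simp only [Nat.factorization_mul hm hn, Finsupp.add_apply] at hmn_prod
  rw [hm_prod, hn_prod, hmn_prod, ← prod_mul_distrib, ← prod_pow]
  refine prod_le_prod (fun p hp ↦ ?_) fun p hp ↦ hf_pow p _ _ (Nat.prime_of_mem_primeFactors hp)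
  have hp := Nat.prime_of_mem_primeFactors hp
  exact mul_nonneg (hf_nonneg p _ hp) (hf_nonneg p _ hp)

end ArithmeticFunction.IsMultiplicative

lemma MulChar.IsQuadratic.nonneg_or_eq_neg_one {M R : Type*} [CommMonoid M] [CommRing R]
    [LinearOrder R] [IsStrictOrderedRing R] {χ : MulChar M R} (hχ : χ.IsQuadratic) (a : M) :
    0 ≤ χ a ∨ χ a = -1 := by
  rcases hχ a with h | h | h <;> simp [h]

namespace DirichletCharacter

variable {R : Type*} {N : ℕ}

section CommSemiring

variable [CommSemiring R] (χ : DirichletCharacter R N)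

noncomputable def divisorSum : ArithmeticFunction R :=
  ζ * toArithmeticFunction (χ ·)

lemma divisorSum_apply (n : ℕ) : χ.divisorSum n = ∑ d ∈ n.divisors, χ d := by
  rw [divisorSum, coe_zeta_mul_apply]
  exact sum_congr rfl fun d hd ↦
    (χ.apply_eq_toArithmeticFunction_apply (Nat.pos_of_mem_divisors hd).ne').symm

lemma isMultiplicative_divisorSum : χ.divisorSum.IsMultiplicative :=
  isMultiplicative_zeta.natCast.mul χ.isMultiplicative_toArithmeticFunction

lemma divisorSum_prime_pow {p : ℕ} (hp : p.Prime) (k : ℕ) :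
    χ.divisorSum (p ^ k) = ∑ i ∈ range (k + 1), χ p ^ i := by
  simp only [divisorSum_apply, Nat.sum_divisors_prime_pow hp, Nat.cast_pow, map_pow]

end CommSemiring

section LinearOrder

variable [CommRing R] [LinearOrder R] [IsStrictOrderedRing R] {χ : DirichletCharacter R N}

lemma divisorSum_mul_le_sq (hχ : χ.IsQuadratic) (m n : ℕ) :
    χ.divisorSum m * χ.divisorSum n ≤ χ.divisorSum (m * n) ^ 2 := by
  refine χ.isMultiplicative_divisorSum.mul_le_sq_of_prime_pow (fun p k hp ↦ ?_) (fun p a b hp ↦ ?_) m n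
  · rw [divisorSum_prime_pow χ hp]
    refine geom_sum_nonneg_of_neg_one_le ?_ _
    rcases hχ.nonneg_or_eq_neg_one p with h | h
    · linarith
    · exact h.ge
  · simp only [divisorSum_prime_pow χ hp]
    exact geom_sum_succ_mul_le_sq (hχ.nonneg_or_eq_neg_one p) a b

end LinearOrder

end DirichletCharacter

theorem lambda_mul_le_sq_general (D : ℕ) (χ : DirichletCharacter ℝ D)
    (hχ : ∀ m : ZMod D, χ m = 0 ∨ χ m = 1 ∨ χ m = -1)
    (d l : ℕ) :
    (∑ h ∈ l.divisors, χ h) * (∑ h ∈ d.divisors, χ h) ≤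
      (∑ h ∈ (d * l).divisors, χ h) ^ 2 := by
  simpa only [DirichletCharacter.divisorSum_apply, mul_comm l d] using
    DirichletCharacter.divisorSum_mul_le_sq hχ l d

/-- For a real Dirichlet character `χ`, `λ = χ ∗ 1`, and `d, l ≥ 1`,
`λ(l)·λ(d) ≤ λ(d·l)²`. -/
theorem lambda_mul_le_sq (D : ℕ) (χ : DirichletCharacter ℝ D)
    (hχ : ∀ m : ZMod D, χ m = 0 ∨ χ m = 1 ∨ χ m = -1)
    (d l : ℕ) (hd : 1 ≤ d) (hl : 1 ≤ l) :
    (∑ h ∈ l.divisors, χ h) * (∑ h ∈ d.divisors, χ h) ≤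
      (∑ h ∈ (d * l).divisors, χ h) ^ 2 :=
  lambda_mul_le_sq_general D χ hχ d l
end

section
/- Let χ be a nonprincipal real Dirichlet character mod D and λ = χ ∗ 1. Then ∑_{d ≤ x} λ(d) = x·L(1,χ) + O(√(Dx)), where L(1,χ) = ∑_{n≥1} χ(n)/n and the implied constant is absolute. -/
/-!
Write `λ(d) = ∑_{hm = d} χ(h)` and split the lattice points `hm ≤ x` at `h = y` (Dirichlet's
hyperbola method): the part `h ≤ y` is `x ∑_{h ≤ y} χ(h)/h` up to `y` rounding errors, and the
part `h > y` is a sum over `m ≤ x/(y+1)` of sums of `χ` over intervals, each of size at most `2D`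
because `χ` sums to zero over a period. By Abel summation the tail `L - ∑_{h ≤ y} χ(h)/h` is
`O(D/y)`; for `D ≤ x` the choice `y ≈ √(Dx)` balances the three errors. For `x < D` take `y = x`
and bound the tail by `O(√(D/x))` using the interpolated bound `|∑_{n ≤ N} χ(n)| ≤ √(DN)`.
At level `D = 0` (where `ZMod 0 = ℤ`) every character vanishes on `n ≥ 2`, so the error is `0`.
-/

open Finset Filter Topology Real

theorem sum_Ioc_sum_divisors_eq_sum_mul_div {R : Type*} [Semiring R] (f : ℕ → R) (x : ℕ) :
    ∑ d ∈ Ioc 0 x, ∑ h ∈ d.divisors, f h = ∑ h ∈ Ioc 0 x, f h * (x / h : ℕ) := by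
  let F : ArithmeticFunction R := ⟨fun n => if n = 0 then 0 else f n, if_pos rfl⟩
  have hF : ∀ n, n ≠ 0 → F n = f n := fun n hn => if_neg hn
  rw [← sum_congr rfl fun h hh => congrArg (· * _) (hF h (mem_Ioc.1 hh).1.ne'),
    ← ArithmeticFunction.sum_Ioc_mul_zeta_eq_sum]
  refine sum_congr rfl fun d _ => ?_
  rw [ArithmeticFunction.coe_mul_zeta_apply]
  exact sum_congr rfl fun h hh => (hF h (Nat.pos_of_mem_divisors hh).ne').symm

theorem sum_Ioc_mul_div_eq_sum_sum {R : Type*} [Semiring R] (f : ℕ → R) (x y : ℕ) :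
    ∑ h ∈ Ioc y x, f h * (x / h : ℕ) = ∑ m ∈ Ioc 0 (x / (y + 1)), ∑ h ∈ Ioc y (x / m), f h := by
  have hcount : ∀ h, f h * (x / h : ℕ) = ∑ _m ∈ Ioc 0 (x / h), f h := by
    simp [Nat.cast_comm]
  simp_rw [hcount]
  refine sum_comm' fun h m => ?_
  simp only [mem_Ioc]
  constructor
  · rintro ⟨⟨hyh, hhx⟩, hm, hmh⟩
    rw [Nat.le_div_iff_mul_le (by omega)] at hmh
    rw [Nat.le_div_iff_mul_le hm, Nat.le_div_iff_mul_le (by omega)]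
    exact ⟨⟨hyh, by nlinarith⟩, hm, by nlinarith⟩
  · rintro ⟨⟨hyh, hhm⟩, hm, -⟩
    rw [Nat.le_div_iff_mul_le hm] at hhm
    rw [Nat.le_div_iff_mul_le (by omega)]
    exact ⟨⟨hyh, by nlinarith⟩, hm, by nlinarith⟩

theorem abs_natCast_div_sub_div_le_one (x h : ℕ) : |((x / h : ℕ) : ℝ) - x / h| ≤ 1 := by
  rw [← Nat.floor_div_eq_div (K := ℝ), abs_le]
  have hfloor := Nat.floor_le (by positivity : (0 : ℝ) ≤ x / h)
  have hfloor' := Nat.lt_floor_add_one ((x : ℝ) / h)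
  constructor <;> linarith

theorem one_div_sub_one_div_add_one_nonneg {h : ℕ} (hh : 0 < h) :
    0 ≤ 1 / (h : ℝ) - 1 / (h + 1) :=
  sub_nonneg.2 (one_div_le_one_div_of_le (by exact_mod_cast hh) (by linarith))

theorem sqrt_mul_one_div_sub_one_div_le {x : ℝ} (hx : 0 < x) :
    √x * (1 / x - 1 / (x + 1)) ≤ 2 / √x - 2 / √(x + 1) := by
  obtain ⟨s, hs, rfl⟩ : ∃ s, 0 < s ∧ s ^ 2 = x := ⟨√x, sqrt_pos.2 hx, sq_sqrt hx.le⟩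
  obtain ⟨t, ht, hts⟩ : ∃ t, 0 < t ∧ t ^ 2 = s ^ 2 + 1 :=
    ⟨√(s ^ 2 + 1), sqrt_pos.2 (by positivity), sq_sqrt (by positivity)⟩
  rw [sqrt_sq hs.le, ← hts, sqrt_sq ht.le, ← sub_nonneg]
  have key : 2 / s - 2 / t - s * (1 / s ^ 2 - 1 / t ^ 2) = (t - s) ^ 2 / (s * t ^ 2) := by
    field_simp
    ring
  rw [key]
  positivity

noncomputable def partialSum (a : ℕ → ℝ) (N : ℕ) : ℝ := ∑ n ∈ Ioc 0 N, a n

section PartialSum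

variable (a : ℕ → ℝ)

theorem partialSum_succ (N : ℕ) : partialSum a (N + 1) = partialSum a N + a (N + 1) :=
  sum_Ioc_succ_top (Nat.zero_le N) a

theorem abs_sum_Ioc_le_two_mul {M : ℝ} (hM : ∀ N, |partialSum a N| ≤ M) (y N : ℕ) :
    |∑ h ∈ Ioc y N, a h| ≤ 2 * M := by
  rcases le_total y N with hyN | hNy
  · rw [← add_sub_cancel_left (partialSum a y) (∑ h ∈ Ioc y N, a h), partialSum,
      sum_Ioc_consecutive _ (Nat.zero_le y) hyN, ← partialSum, two_mul]
    exact (abs_sub _ _).trans (add_le_add (hM N) (hM y))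
  · rw [Ioc_eq_empty_of_le hNy, sum_empty, abs_zero]
    linarith [(abs_nonneg _).trans (hM 0)]

theorem sum_Ioc_div_eq_abel {y N : ℕ} (hyN : y ≤ N) :
    ∑ h ∈ Ioc y N, a h / h = ∑ h ∈ Ioc y N, partialSum a h * (1 / h - 1 / (h + 1)) +
      partialSum a N / (N + 1) - partialSum a y / (y + 1) := by
  induction N, hyN using Nat.le_induction with
  | base => simp
  | succ N hyN ih =>
    rw [sum_Ioc_succ_top (by omega), sum_Ioc_succ_top (by omega), ih, partialSum_succ]
    push_cast
    ring

theorem abs_sum_Ioc_div_le_of_majorant (G : ℕ → ℝ)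
    (hstep : ∀ h, 0 < h → |partialSum a h| * (1 / h - 1 / (h + 1)) ≤ G h - G (h + 1))
    (hend : ∀ h, |partialSum a h| / (h + 1) ≤ G (h + 1)) {y N : ℕ} (hyN : y ≤ N) :
    |∑ h ∈ Ioc y N, a h / h| ≤ 2 * G (y + 1) := by
  have hsum : |∑ h ∈ Ioc y N, partialSum a h * (1 / h - 1 / (h + 1))| ≤ G (y + 1) - G (N + 1) :=
    calc _ ≤ ∑ h ∈ Ioc y N, |partialSum a h * (1 / h - 1 / (h + 1))| := abs_sum_le_sum_abs _ _
      _ ≤ ∑ h ∈ Ioc y N, (G h - G (h + 1)) := sum_le_sum fun h hh => by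
        have hh : 0 < h := by simp at hh; omega
        rw [abs_mul, abs_of_nonneg (one_div_sub_one_div_add_one_nonneg hh)]
        exact hstep h hh
      _ = G (y + 1) - G (N + 1) := by
        rw [← Ico_add_one_add_one_eq_Ioc, ← neg_sub, ← sum_Ico_sub G (by omega),
          ← sum_neg_distrib]
        simp only [neg_sub]
  have hend' : ∀ h : ℕ, |partialSum a h / (h + 1)| ≤ G (h + 1) := fun h => by
    rw [abs_div, abs_of_pos (by positivity : (0 : ℝ) < h + 1)]
    exact hend h
  rw [sum_Ioc_div_eq_abel a hyN]
  calc _ ≤ |∑ h ∈ Ioc y N, partialSum a h * (1 / h - 1 / (h + 1))| +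
        |partialSum a N / (N + 1)| + |partialSum a y / (y + 1)| :=
        (abs_sub _ _).trans (by gcongr; exact abs_add_le _ _)
    _ ≤ (G (y + 1) - G (N + 1)) + G (N + 1) + G (y + 1) := by
        gcongr
        exacts [hend' N, hend' y]
    _ = 2 * G (y + 1) := by ring

theorem abs_sum_sum_divisors_sub_le (ha : ∀ n, |a n| ≤ 1) {M : ℝ}
    (hM : ∀ N, |partialSum a N| ≤ M) {L T : ℝ} {x y : ℕ} (hyx : y ≤ x)
    (hT : |L - ∑ h ∈ Ioc 0 y, a h / h| ≤ T) :
    |∑ d ∈ Ioc 0 x, ∑ h ∈ d.divisors, a h - x * L| ≤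
      y + (x / (y + 1) : ℕ) * (2 * M) + x * T := by
  have hdecomp : ∑ d ∈ Ioc 0 x, ∑ h ∈ d.divisors, a h - x * L =
      ∑ h ∈ Ioc 0 y, a h * ((x / h : ℕ) - (x : ℝ) / h) +
        ∑ m ∈ Ioc 0 (x / (y + 1)), ∑ h ∈ Ioc y (x / m), a h -
        x * (L - ∑ h ∈ Ioc 0 y, a h / h) := by
    rw [sum_Ioc_sum_divisors_eq_sum_mul_div, ← sum_Ioc_consecutive _ (Nat.zero_le y) hyx,
      sum_Ioc_mul_div_eq_sum_sum]
    simp only [mul_sub, sum_sub_distrib, mul_sum, mul_div_assoc']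
    ring_nf
  have hsmall : |∑ h ∈ Ioc 0 y, a h * ((x / h : ℕ) - (x : ℝ) / h)| ≤ y :=
    calc _ ≤ ∑ h ∈ Ioc 0 y, |a h * ((x / h : ℕ) - (x : ℝ) / h)| := abs_sum_le_sum_abs _ _
      _ ≤ ∑ _h ∈ Ioc 0 y, (1 : ℝ) := sum_le_sum fun h _ => by
        rw [abs_mul]
        exact mul_le_one₀ (ha h) (abs_nonneg _) (abs_natCast_div_sub_div_le_one x h)
      _ = y := by simp
  have hlarge : |∑ m ∈ Ioc 0 (x / (y + 1)), ∑ h ∈ Ioc y (x / m), a h| ≤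
      (x / (y + 1) : ℕ) * (2 * M) :=
    calc _ ≤ ∑ m ∈ Ioc 0 (x / (y + 1)), |∑ h ∈ Ioc y (x / m), a h| := abs_sum_le_sum_abs _ _
      _ ≤ ∑ _m ∈ Ioc 0 (x / (y + 1)), 2 * M :=
        sum_le_sum fun m _ => abs_sum_Ioc_le_two_mul a hM y (x / m)
      _ = _ := by simp
  have htail : |x * (L - ∑ h ∈ Ioc 0 y, a h / h)| ≤ x * T := by
    rw [abs_mul, Nat.abs_cast]
    gcongr
  rw [hdecomp]
  exact (abs_sub _ _).trans (add_le_add ((abs_add_le _ _).trans (add_le_add hsmall hlarge)) htail)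

variable {L : ℝ} (hL : Tendsto (fun N => ∑ n ∈ range N, a n / n) atTop (𝓝 L))
include hL

theorem abs_sub_sum_Ioc_div_le {y : ℕ} {B : ℝ}
    (hB : ∀ N, y ≤ N → |∑ h ∈ Ioc y N, a h / h| ≤ B) :
    |L - ∑ h ∈ Ioc 0 y, a h / h| ≤ B := by
  have hIoc : Tendsto (fun N => ∑ n ∈ Ioc 0 N, a n / n) atTop (𝓝 L) := by
    refine (hL.comp (tendsto_add_atTop_nat 1)).congr fun N => ?_
    rw [Function.comp_apply, range_eq_Ico, Ico_add_one_right_eq_Icc, ← sum_Ioc_add_eq_sum_Icc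
      (Nat.zero_le N), Nat.cast_zero, div_zero, add_zero]
  refine le_of_tendsto ((hIoc.sub_const _).abs) ?_
  filter_upwards [eventually_ge_atTop y] with N hN
  rw [← sum_Ioc_consecutive _ (Nat.zero_le y) hN, add_sub_cancel_left]
  exact hB N hN

theorem abs_sub_sum_Ioc_div_le_of_majorant (G : ℕ → ℝ)
    (hstep : ∀ h, 0 < h → |partialSum a h| * (1 / h - 1 / (h + 1)) ≤ G h - G (h + 1))
    (hend : ∀ h, |partialSum a h| / (h + 1) ≤ G (h + 1)) (y : ℕ) :
    |L - ∑ h ∈ Ioc 0 y, a h / h| ≤ 2 * G (y + 1) :=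
  abs_sub_sum_Ioc_div_le a hL fun _ hN => abs_sum_Ioc_div_le_of_majorant a G hstep hend hN

theorem abs_sub_sum_Ioc_div_le_of_abs_partialSum_le {M : ℝ} (hM : ∀ N, |partialSum a N| ≤ M)
    (y : ℕ) : |L - ∑ h ∈ Ioc 0 y, a h / h| ≤ 2 * M / (y + 1) := by
  refine (abs_sub_sum_Ioc_div_le_of_majorant a hL (fun h => M / h) (fun h hh => ?_)
    (fun h => by push_cast; gcongr; exact hM h) y).trans_eq (by push_cast; ring)
  calc _ ≤ M * (1 / h - 1 / (h + 1)) := by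
        gcongr
        · exact one_div_sub_one_div_add_one_nonneg hh
        · exact hM h
    _ = _ := by push_cast; ring

theorem abs_sub_sum_Ioc_div_le_of_abs_partialSum_le_mul_sqrt {c : ℝ}
    (hc : ∀ N, |partialSum a N| ≤ c * √N) (y : ℕ) :
    |L - ∑ h ∈ Ioc 0 y, a h / h| ≤ 4 * c / √(y + 1) := by
  have hc0 : 0 ≤ c := by simpa using (abs_nonneg _).trans (hc 1)
  refine (abs_sub_sum_Ioc_div_le_of_majorant a hL (fun h => 2 * c / √h) (fun h hh => ?_)
    (fun h => ?_) y).trans_eq (by push_cast; ring)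
  · calc _ ≤ c * (√h * (1 / h - 1 / (h + 1))) := by
          rw [← mul_assoc]
          gcongr
          · exact one_div_sub_one_div_add_one_nonneg hh
          · exact hc h
      _ ≤ c * (2 / √h - 2 / √(h + 1)) := by
          gcongr
          exact sqrt_mul_one_div_sub_one_div_le (by exact_mod_cast hh)
      _ = _ := by push_cast; ring
  · have hsqrt : √(h : ℝ) / (h + 1) ≤ 1 / √(h + 1) := by
      rw [div_le_div_iff₀ (by positivity) (by positivity), one_mul]
      calc √h * √(h + 1) ≤ √(h + 1) * √(h + 1) := by gcongr; linarith
        _ = h + 1 := mul_self_sqrt (by positivity)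
    calc _ ≤ c * (√h / (h + 1)) := by rw [mul_div_assoc']; gcongr; exact hc h
      _ ≤ c * (2 / √(h + 1)) :=
        mul_le_mul_of_nonneg_left (hsqrt.trans (by gcongr; norm_num)) hc0
      _ = _ := by push_cast; ring

end PartialSum

namespace DirichletCharacter

theorem sum_range_natCast_add_eq_zero {R : Type*} [CommRing R] [IsDomain R] {D : ℕ} [NeZero D]
    {χ : DirichletCharacter R D} (hχ : χ ≠ 1) (a : ℕ) :
    ∑ i ∈ range D, χ (a + i : ℕ) = 0 := by
  obtain ⟨k, rfl⟩ : ∃ k, D = k + 1 := Nat.exists_eq_succ_of_ne_zero (NeZero.ne D)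
  rw [sum_range]
  change ∑ u : ZMod (k + 1), χ (a + u.val : ℕ) = 0
  simp_rw [Nat.cast_add, ZMod.natCast_zmod_val]
  exact (Equiv.sum_comp (Equiv.addLeft (a : ZMod (k + 1))) χ).trans
    (MulChar.sum_eq_zero_of_ne_one hχ)

theorem norm_sum_range_natCast_add_le {F : Type*} [NormedField F] {D : ℕ} [NeZero D]
    {χ : DirichletCharacter F D} (hχ : χ ≠ 1) (a N : ℕ) :
    ‖∑ i ∈ range N, χ (a + i : ℕ)‖ ≤ D := by
  induction N using Nat.strong_induction_on generalizing a with
  | _ N ih =>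
    rcases lt_or_ge N D with hND | hDN
    · calc _ ≤ ∑ i ∈ range N, ‖χ (a + i : ℕ)‖ := norm_sum_le _ _
        _ ≤ ∑ _i ∈ range N, (1 : ℝ) := sum_le_sum fun i _ => χ.norm_le_one _
        _ ≤ D := by simpa using hND.le
    · obtain ⟨n, rfl⟩ := Nat.exists_eq_add_of_le hDN
      rw [sum_range_add, sum_range_natCast_add_eq_zero hχ, zero_add]
      simp_rw [← add_assoc]
      exact ih n (by have := NeZero.pos D; omega) (a + D)

theorem natCast_eq_ite_of_level_zero {R : Type*} [CommMonoidWithZero R]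
    (χ : DirichletCharacter R 0) (n : ℕ) : χ n = if n = 1 then 1 else 0 := by
  split_ifs with hn
  · rw [hn, Nat.cast_one, map_one]
  · refine χ.map_nonunit fun hu => ?_
    have : (n : ℤ) = 1 ∨ (n : ℤ) = -1 := Int.isUnit_iff.1 hu
    omega

theorem sum_sum_divisors_sub_mul_eq_zero_of_level_zero (χ : DirichletCharacter ℝ 0) {L : ℝ}
    (hL : Tendsto (fun N => ∑ n ∈ range N, χ n / (n : ℝ)) atTop (𝓝 L)) (x : ℕ) :
    ∑ d ∈ Ioc 0 x, ∑ h ∈ d.divisors, χ h - x * L = 0 := by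
  simp only [natCast_eq_ite_of_level_zero] at hL ⊢
  have hL1 : L = 1 := by
    refine tendsto_nhds_unique hL (tendsto_const_nhds.congr' ?_)
    filter_upwards [eventually_gt_atTop 1] with N hN
    simp [ite_div, hN]
  rw [hL1, sum_congr rfl fun d hd => (by simp [(mem_Ioc.1 hd).1.ne'] : _ = (1 : ℝ))]
  simp

variable {D : ℕ} (χ : DirichletCharacter ℝ D)

theorem abs_partialSum_le_self (N : ℕ) : |partialSum (fun n => χ n) N| ≤ N :=
  calc _ ≤ ∑ n ∈ Ioc 0 N, |χ n| := abs_sum_le_sum_abs _ _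
    _ ≤ ∑ _n ∈ Ioc 0 N, (1 : ℝ) := sum_le_sum fun n _ => χ.norm_le_one n
    _ = N := by simp

variable [NeZero D] {χ} (hχ : χ ≠ 1)
include hχ

theorem abs_partialSum_le (N : ℕ) : |partialSum (fun n => χ n) N| ≤ D := by
  rw [partialSum, ← Ico_add_one_add_one_eq_Ioc, sum_Ico_eq_sum_range, zero_add,
    Nat.add_sub_cancel, ← Real.norm_eq_abs]
  exact norm_sum_range_natCast_add_le hχ 1 N

theorem abs_partialSum_le_sqrt_mul_sqrt (N : ℕ) :
    |partialSum (fun n => χ n) N| ≤ √D * √N := by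
  rw [← sqrt_mul (Nat.cast_nonneg _)]
  refine Real.abs_le_sqrt ?_
  rw [sq, ← abs_mul_abs_self]
  exact mul_le_mul (abs_partialSum_le hχ N) (abs_partialSum_le_self χ N) (abs_nonneg _)
    (Nat.cast_nonneg _)

variable {L : ℝ} (hL : Tendsto (fun N => ∑ n ∈ range N, χ n / (n : ℝ)) atTop (𝓝 L))
include hL

theorem abs_sum_sum_divisors_sub_le_of_le {x : ℕ} (hDx : D ≤ x) :
    |∑ d ∈ Ioc 0 x, ∑ h ∈ d.divisors, χ h - x * L| ≤ 5 * √(D * x) := by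
  set y := Nat.sqrt (D * x)
  have hyx : y ≤ x := by
    simpa [Nat.sqrt_eq] using Nat.sqrt_le_sqrt (Nat.mul_le_mul_right x hDx)
  have hy : (y : ℝ) ≤ √(D * x) := by exact_mod_cast Real.nat_sqrt_le_real_sqrt
  have hy1 : √(D * x) < y + 1 := by exact_mod_cast Real.real_sqrt_lt_nat_sqrt_succ
  have hquot : (D : ℝ) * x / (y + 1) ≤ √(D * x) := by
    rw [div_le_iff₀ (by positivity)]
    calc (D : ℝ) * x = √(D * x) * √(D * x) := (mul_self_sqrt (by positivity)).symm
      _ ≤ √(D * x) * (y + 1) := by gcongr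
  have hfloor : ((x / (y + 1) : ℕ) : ℝ) ≤ x / (y + 1) := by exact_mod_cast Nat.cast_div_le
  refine (abs_sum_sum_divisors_sub_le _ (fun n => χ.norm_le_one n) (abs_partialSum_le hχ) hyx
    (abs_sub_sum_Ioc_div_le_of_abs_partialSum_le _ hL (abs_partialSum_le hχ) y)).trans ?_
  calc _ ≤ √(D * x) + x / (y + 1) * (2 * D) + x * (2 * D / (y + 1)) := by gcongr
    _ = √(D * x) + 4 * (D * x / (y + 1)) := by ring
    _ ≤ 5 * √(D * x) := by linarith

theorem abs_sum_sum_divisors_sub_le_of_lt {x : ℕ} (hxD : x < D) :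
    |∑ d ∈ Ioc 0 x, ∑ h ∈ d.divisors, χ h - x * L| ≤ 5 * √(D * x) := by
  have hx : (x : ℝ) ≤ √(D * x) := Real.le_sqrt_of_sq_le (by rw [sq]; gcongr)
  have hdiv : (x : ℝ) / √(x + 1) ≤ √x := by
    rw [div_le_iff₀ (by positivity)]
    calc (x : ℝ) = √x * √x := (mul_self_sqrt (by positivity)).symm
      _ ≤ √x * √(x + 1) := by gcongr; linarith
  have htail : x * (4 * √D / √(x + 1)) ≤ 4 * √(D * x) := by
    rw [sqrt_mul (Nat.cast_nonneg _)]
    calc x * (4 * √D / √(x + 1)) = 4 * √D * (x / √(x + 1)) := by ring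
      _ ≤ 4 * √D * √x := by gcongr
      _ = 4 * (√D * √x) := by ring
  refine (abs_sum_sum_divisors_sub_le _ (fun n => χ.norm_le_one n) (abs_partialSum_le hχ) le_rfl
    (abs_sub_sum_Ioc_div_le_of_abs_partialSum_le_mul_sqrt _ hL
      (abs_partialSum_le_sqrt_mul_sqrt hχ) x)).trans ?_
  rw [Nat.div_eq_of_lt (Nat.lt_succ_self x), Nat.cast_zero, zero_mul, add_zero]
  linarith

end DirichletCharacter

/-- For a nonprincipal real Dirichlet character `χ` mod `D` with `λ = χ ∗ 1`,
`∑_{d ≤ x} λ(d) = x·L(1,χ) + O(√(Dx))` with an absolute implied constant, where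
`L(1,χ) = ∑_{n ≥ 1} χ(n)/n`. -/
theorem sum_lambda_asymptotic :
    ∃ C : ℝ, 0 < C ∧
      ∀ (D : ℕ) (χ : DirichletCharacter ℝ D),
        χ ≠ 1 →
        (∀ m : ZMod D, χ m = 0 ∨ χ m = 1 ∨ χ m = -1) →
        ∀ L : ℝ,
          Filter.Tendsto (fun N : ℕ => ∑ n ∈ Finset.range N, χ n / (n : ℝ))
            Filter.atTop (nhds L) →
          ∀ x : ℕ, 1 ≤ x →
            |(∑ d ∈ Finset.Icc 1 x, ∑ h ∈ d.divisors, χ h) - (x : ℝ) * L| ≤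
              C * Real.sqrt ((D : ℝ) * (x : ℝ)) := by
  refine ⟨5, by norm_num, fun D χ hχ _ L hL x _ => ?_⟩
  rw [show Icc 1 x = Ioc 0 x from rfl]
  rcases Nat.eq_zero_or_pos D with rfl | hD
  · rw [χ.sum_sum_divisors_sub_mul_eq_zero_of_level_zero hL x, abs_zero]
    positivity
  have : NeZero D := ⟨hD.ne'⟩
  rcases le_or_gt D x with hDx | hxD
  · exact DirichletCharacter.abs_sum_sum_divisors_sub_le_of_le hχ hL hDx
  · exact DirichletCharacter.abs_sum_sum_divisors_sub_le_of_lt hχ hL hxD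
end

section
/- Let q ≥ 2 and 0 < α < 1/5. Then ∑_{1 ≤ r ≤ q-1, gcd(r,q) > q^{1/5 - α}} 1/r ≪ q^{-1/5 + 3α} for all sufficiently large q, where the sum is over residues r whose gcd with q exceeds q^{1/5-α}. -/
/-!
Group the residues `r` by `d = gcd(r, q)`, a divisor of `q` exceeding `T = q^(1/5 - α)`. The
multiples of `d` up to `q` have reciprocal sum at most `(1 + log q) / d < (1 + log q) / T`, so the
whole sum is at most `τ(q) (1 + log q) / T`, and both `τ(q)` and `1 + log q` are `O(q^α)`.

The divisor bound `τ(n) ≤ C_ε n^ε` comes from `τ(n) = ∏ (a_p + 1)` over `n = ∏ p^(a_p)`: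
`a + 1 ≤ 2^a ≤ p^(aε)` once `p ≥ 2^(1/ε)`, while each of the finitely many smaller primes costs
at most the factor `1 + 1/(ε log 2)`, since `p^(aε) ≥ exp(aε log 2) ≥ 1 + aε log 2`.
-/

open Finset Real

section DivisorBound

variable {ε : ℝ}

lemma succ_le_rpow_of_two_rpow_inv_le (hε : 0 < ε) {p : ℝ} (hp : 2 ^ (1 / ε) ≤ p) (a : ℕ) :
    (a + 1 : ℝ) ≤ (p ^ a) ^ ε := by
  have hp0 : 0 ≤ p := (rpow_nonneg zero_le_two _).trans hp
  calc (a + 1 : ℝ) ≤ 2 ^ a := by exact_mod_cast Nat.lt_two_pow_self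
    _ = ((2 : ℝ) ^ (1 / ε)) ^ ((a : ℝ) * ε) := by
      rw [← rpow_mul zero_le_two, one_div_mul_eq_div, mul_div_cancel_right₀ _ hε.ne', rpow_natCast]
    _ ≤ p ^ ((a : ℝ) * ε) := by gcongr
    _ = (p ^ a) ^ ε := by rw [rpow_mul hp0, rpow_natCast]

lemma succ_le_mul_rpow (hε : 0 < ε) {p : ℝ} (hp : 2 ≤ p) (a : ℕ) :
    (a + 1 : ℝ) ≤ (1 + 1 / (ε * log 2)) * (p ^ a) ^ ε := by
  set c := ε * log 2 with hc_def
  have hc : 0 < c := mul_pos hε (log_pos one_lt_two)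
  have hexp : 1 + a * c ≤ (p ^ a) ^ ε := calc
    1 + a * c ≤ exp (a * c) := by linarith [add_one_le_exp (a * c)]
    _ = 2 ^ ((a : ℝ) * ε) := by rw [rpow_def_of_pos two_pos, hc_def]; ring_nf
    _ ≤ p ^ ((a : ℝ) * ε) := by gcongr
    _ = (p ^ a) ^ ε := by rw [rpow_mul (by linarith), rpow_natCast]
  have hexpand : (1 + 1 / c) * (1 + a * c) = 1 + a + (a * c + 1 / c) := by
    field_simp
    ring
  have hrest : 0 ≤ a * c + 1 / c := by positivity
  calc (a + 1 : ℝ) ≤ (1 + 1 / c) * (1 + a * c) := by rw [hexpand]; linarith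
    _ ≤ (1 + 1 / c) * (p ^ a) ^ ε := by gcongr

theorem Nat.exists_card_divisors_le_mul_rpow (hε : 0 < ε) :
    ∃ C : ℝ, 0 < C ∧ ∀ n : ℕ, (#n.divisors : ℝ) ≤ C * n ^ ε := by
  set B : ℝ := 1 + 1 / (ε * Real.log 2)
  have hB : 1 ≤ B := le_add_of_nonneg_right (by have := Real.log_pos one_lt_two; positivity)
  set K := ⌈(2 : ℝ) ^ (1 / ε)⌉₊
  refine ⟨B ^ K, by positivity, fun n => ?_⟩
  rcases eq_or_ne n 0 with rfl | hn
  · simp only [Nat.divisors_zero, card_empty, Nat.cast_zero]; positivity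
  have hfactor : ∀ p ∈ n.primeFactors, ((n.factorization p + 1 : ℕ) : ℝ) ≤
      (if p < K then B else 1) * ((p : ℝ) ^ n.factorization p) ^ ε := by
    intro p hp
    have hp2 : (2 : ℝ) ≤ p := by exact_mod_cast (Nat.prime_of_mem_primeFactors hp).two_le
    push_cast
    split_ifs with hpK
    · exact succ_le_mul_rpow hε hp2 _
    · rw [one_mul]
      exact succ_le_rpow_of_two_rpow_inv_le hε
        ((Nat.le_ceil _).trans (Nat.cast_le.2 (not_lt.1 hpK))) _
  have hweights : ∏ p ∈ n.primeFactors, (if p < K then B else 1) ≤ B ^ K := by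
    rw [prod_ite, prod_const, prod_const, one_pow, mul_one]
    refine pow_le_pow_right₀ hB ?_
    simpa using card_le_card (fun p hp => mem_range.2 (mem_filter.1 hp).2 :
      {p ∈ n.primeFactors | p < K} ⊆ range K)
  have hpowers : ∏ p ∈ n.primeFactors, ((p : ℝ) ^ n.factorization p) ^ ε = n ^ ε := by
    rw [finsetProd_rpow _ _ fun p _ => by positivity]
    congr 1
    exact_mod_cast Nat.prod_factorization_pow_eq_self hn
  calc (#n.divisors : ℝ) = ∏ p ∈ n.primeFactors, ((n.factorization p + 1 : ℕ) : ℝ) := by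
        rw [Nat.card_divisors hn]; push_cast; rfl
    _ ≤ ∏ p ∈ n.primeFactors, (if p < K then B else 1) * ((p : ℝ) ^ n.factorization p) ^ ε :=
        prod_le_prod (fun _ _ => by positivity) hfactor
    _ = (∏ p ∈ n.primeFactors, (if p < K then B else 1)) * n ^ ε := by
        rw [prod_mul_distrib, hpowers]
    _ ≤ B ^ K * n ^ ε := by gcongr

end DivisorBound

lemma sum_one_div_filter_dvd_le (d N : ℕ) :
    ∑ r ∈ Icc 1 N with d ∣ r, (1 : ℝ) / r ≤ (1 + log N) / d := by
  rcases Nat.eq_zero_or_pos d with rfl | hd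
  · rw [filter_false_of_mem fun r hr => by grind [zero_dvd_iff]]
    simp
  have hsub : {r ∈ Icc 1 N | d ∣ r} ⊆ (Icc 1 (N / d)).image (d * ·) := by
    intro r hr
    obtain ⟨hr, m, rfl⟩ := mem_filter.1 hr
    rw [mem_Icc] at hr
    refine mem_image.2 ⟨m, mem_Icc.2 ⟨?_, ?_⟩, rfl⟩
    · exact Nat.pos_of_ne_zero (by rintro rfl; omega)
    · exact (Nat.le_div_iff_mul_le hd).2 (by linarith)
  have hinj : Set.InjOn (d * ·) (Icc 1 (N / d)) :=
    fun _ _ _ _ h => Nat.eq_of_mul_eq_mul_left hd h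
  calc ∑ r ∈ Icc 1 N with d ∣ r, (1 : ℝ) / r
      ≤ ∑ r ∈ (Icc 1 (N / d)).image (d * ·), (1 : ℝ) / r :=
        sum_le_sum_of_subset_of_nonneg hsub fun _ _ _ => by positivity
    _ = (∑ m ∈ Icc 1 (N / d), (m : ℝ)⁻¹) / d := by
        rw [sum_image hinj, sum_div]
        refine sum_congr rfl fun m _ => ?_
        push_cast
        rw [one_div, mul_inv, div_eq_mul_inv, mul_comm]
    _ ≤ (∑ m ∈ Icc 1 N, (m : ℝ)⁻¹) / d := by
        gcongr ?_ / _
        exact sum_le_sum_of_subset_of_nonneg (Icc_subset_Icc_right (Nat.div_le_self N d))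
          fun _ _ _ => by positivity
    _ ≤ (1 + log N) / d := by
        gcongr
        simpa [harmonic_eq_sum_Icc] using harmonic_le_one_add_log N

lemma sum_one_div_filter_gcd_le (q : ℕ) {T : ℝ} (hT : 0 < T) :
    ∑ r ∈ Ico 1 q with T < (Nat.gcd r q : ℝ), (1 : ℝ) / r ≤ #q.divisors * (1 + log q) / T := by
  set D := {d ∈ q.divisors | T < ((d : ℕ) : ℝ)}
  have hmaps : ∀ r ∈ {r ∈ Ico 1 q | T < (Nat.gcd r q : ℝ)}, Nat.gcd r q ∈ D := by
    intro r hr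
    obtain ⟨hr, hT⟩ := mem_filter.1 hr
    have hq : q ≠ 0 := Nat.ne_zero_of_lt (mem_Ico.1 hr).2
    exact mem_filter.2 ⟨Nat.mem_divisors.2 ⟨Nat.gcd_dvd_right r q, hq⟩, hT⟩
  calc ∑ r ∈ Ico 1 q with T < (Nat.gcd r q : ℝ), (1 : ℝ) / r
      = ∑ d ∈ D, ∑ r ∈ {r ∈ Ico 1 q | T < (Nat.gcd r q : ℝ)} with Nat.gcd r q = d, (1 : ℝ) / r :=
        (sum_fiberwise_of_maps_to hmaps _).symm
    _ ≤ ∑ d ∈ D, ∑ r ∈ Icc 1 q with d ∣ r, (1 : ℝ) / r := by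
        refine sum_le_sum fun d _ => sum_le_sum_of_subset_of_nonneg ?_ fun _ _ _ => by positivity
        intro r hr
        obtain ⟨hrS, rfl⟩ := mem_filter.1 hr
        exact mem_filter.2 ⟨Ico_subset_Icc_self (mem_filter.1 hrS).1, Nat.gcd_dvd_left r q⟩
    _ ≤ ∑ d ∈ D, (1 + log q) / T := by
        refine sum_le_sum fun d hd => (sum_one_div_filter_dvd_le d q).trans ?_
        gcongr
        exact (mem_filter.1 hd).2.le
    _ ≤ #q.divisors * (1 + log q) / T := by
        rw [sum_const, nsmul_eq_mul, mul_div_assoc]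
        gcongr
        exact filter_subset _ _

theorem sum_recip_large_gcd_general (α : ℝ) (hα0 : 0 < α) :
    ∃ C : ℝ, 0 < C ∧ ∃ Q₀ : ℕ, ∀ q : ℕ, Q₀ ≤ q →
      ∑ r ∈ (Finset.Ico 1 q).filter
          (fun r => (q : ℝ) ^ ((1 : ℝ) / 5 - α) < (Nat.gcd r q : ℝ)),
        (1 : ℝ) / (r : ℝ) ≤
      C * (q : ℝ) ^ (-(1 : ℝ) / 5 + 3 * α) := by
  obtain ⟨C, hC, hdivisors⟩ := Nat.exists_card_divisors_le_mul_rpow hα0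
  refine ⟨C * (1 + 1 / α), by positivity, 1, fun q hq => ?_⟩
  have hq1 : (1 : ℝ) ≤ q := by exact_mod_cast hq
  have hq0 : (0 : ℝ) < q := by linarith
  have hlog : 1 + log q ≤ (1 + 1 / α) * q ^ α := by
    have := log_natCast_le_rpow_div q hα0
    have := one_le_rpow hq1 hα0.le
    rw [add_mul, one_mul, one_div_mul_eq_div]
    linarith
  calc _ ≤ #q.divisors * (1 + log q) / q ^ ((1 : ℝ) / 5 - α) :=
        sum_one_div_filter_gcd_le q (by positivity)
    _ ≤ C * q ^ α * ((1 + 1 / α) * q ^ α) / q ^ ((1 : ℝ) / 5 - α) := by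
        gcongr
        exact hdivisors q
    _ = C * (1 + 1 / α) * q ^ (-(1 : ℝ) / 5 + 3 * α) := by
        have hexponent : (q : ℝ) ^ (-(1 : ℝ) / 5 + 3 * α) =
            q ^ α * q ^ α / q ^ ((1 : ℝ) / 5 - α) := by
          rw [← rpow_add hq0, ← rpow_sub hq0]
          ring_nf
        rw [hexponent]
        ring

/-- For `0 < α < 1/5`, `∑_{1 ≤ r ≤ q-1, gcd(r,q) > q^{1/5-α}} 1/r ≪ q^{-1/5+3α}`
for all sufficiently large `q`. -/
theorem sum_recip_large_gcd (α : ℝ) (hα0 : 0 < α) (hα : α < 1 / 5) :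
    ∃ C : ℝ, 0 < C ∧ ∃ Q₀ : ℕ, ∀ q : ℕ, Q₀ ≤ q →
      ∑ r ∈ (Finset.Ico 1 q).filter
          (fun r => (q : ℝ) ^ ((1 : ℝ) / 5 - α) < (Nat.gcd r q : ℝ)),
        (1 : ℝ) / (r : ℝ) ≤
      C * (q : ℝ) ^ (-(1 : ℝ) / 5 + 3 * α) :=
  sum_recip_large_gcd_general α hα0
end
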